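/- arXiv:2003.01289 — 2 statements merged into one kernel-verified Lean document; each statement's English description precedes it below -/
import Mathlib

section
/- Let F1 and F2 be projections (real-valued functions) on a finite dataset D, with Pearson correlation coefficient ρ over D satisfying |ρ| ≥ 1/2. Then there exist β1, β2 ∈ ℝ with β1² + β2² = 1 such that the projection F = β1·F1 + β2·F2 satisfies σ(F(D)) < σ(F1(D)) and σ(F(D)) < σ(F2(D)), where σ denotes standard deviation over D. -/
open Finset BigOperators

noncomputable def dmean {n : ℕ} (v : Fin n → ℝ) : ℝ := (∑ i, v i) / n

noncomputable def dvar {n : ℕ} (v : Fin n → ℝ) : ℝ := (∑ i, (v i - dmean v) ^ 2) / n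

noncomputable def dstd {n : ℕ} (v : Fin n → ℝ) : ℝ := Real.sqrt (dvar v)

noncomputable def dcorr {n : ℕ} (x y : Fin n → ℝ) : ℝ :=
  ((∑ i, (x i - dmean x) * (y i - dmean y)) / n) / (dstd x * dstd y)

/-!
Since `σ(β₁F₁ + β₂F₂)² = β₁²σ₁² + β₂²σ₂² + 2β₁β₂ρσ₁σ₂`, take `r = √(σ₁² + σ₂²)` and the unit vector
`β = (σ₂, ∓σ₁) / r`, signed against `ρ`. Then `σ(F)² = 2σ₁²σ₂²(1 - |ρ|) / r²`, which for `|ρ| ≥ 1/2`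
is at most `σ₁²σ₂² / r² < min(σ₁², σ₂²)`.
-/

section

variable {n : ℕ}

noncomputable def dcov (x y : Fin n → ℝ) : ℝ := (∑ i, (x i - dmean x) * (y i - dmean y)) / n

lemma dmean_linear_comb (a b : ℝ) (x y : Fin n → ℝ) :
    dmean (fun i => a * x i + b * y i) = a * dmean x + b * dmean y := by
  simp only [dmean, sum_add_distrib, ← mul_sum, add_div, mul_div_assoc]

lemma dvar_linear_comb (a b : ℝ) (x y : Fin n → ℝ) :
    dvar (fun i => a * x i + b * y i) = a ^ 2 * dvar x + b ^ 2 * dvar y + 2 * a * b * dcov x y := by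
  have hexpand : ∀ i, (a * x i + b * y i - (a * dmean x + b * dmean y)) ^ 2 =
      a ^ 2 * (x i - dmean x) ^ 2 + b ^ 2 * (y i - dmean y) ^ 2 +
        2 * a * b * ((x i - dmean x) * (y i - dmean y)) := fun i => by ring
  simp only [dvar, dcov, dmean_linear_comb, hexpand, sum_add_distrib, ← mul_sum]
  ring

lemma dstd_sq (v : Fin n → ℝ) : dstd v ^ 2 = dvar v :=
  Real.sq_sqrt (div_nonneg (sum_nonneg fun _ _ => sq_nonneg _) n.cast_nonneg)

lemma dcov_eq_dcorr_mul {x y : Fin n → ℝ} (hx : dstd x ≠ 0) (hy : dstd y ≠ 0) :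
    dcov x y = dcorr x y * (dstd x * dstd y) :=
  (div_mul_cancel₀ _ (mul_ne_zero hx hy)).symm

end

lemma exists_unit_quadratic_lt {s₁ s₂ c : ℝ} (hs₁ : 0 < s₁) (hs₂ : 0 < s₂)
    (hc : s₁ * s₂ ≤ 2 * |c|) :
    ∃ β₁ β₂ : ℝ, β₁ ^ 2 + β₂ ^ 2 = 1 ∧
      β₁ ^ 2 * s₁ ^ 2 + β₂ ^ 2 * s₂ ^ 2 + 2 * β₁ * β₂ * c < s₁ ^ 2 ∧
      β₁ ^ 2 * s₁ ^ 2 + β₂ ^ 2 * s₂ ^ 2 + 2 * β₁ * β₂ * c < s₂ ^ 2 := by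
  obtain ⟨ε, hε, hεc⟩ : ∃ ε : ℝ, ε ^ 2 = 1 ∧ ε * c = |c| := by
    rcases abs_cases c with ⟨h, _⟩ | ⟨h, _⟩
    · exact ⟨1, by norm_num, by rw [h, one_mul]⟩
    · exact ⟨-1, by norm_num, by rw [h, neg_one_mul]⟩
  set r := Real.sqrt (s₁ ^ 2 + s₂ ^ 2)
  have hr : 0 < r := Real.sqrt_pos.mpr (by positivity)
  have hr2 : r ^ 2 = s₁ ^ 2 + s₂ ^ 2 := Real.sq_sqrt (by positivity)
  have hq : ((s₂ / r) ^ 2 * s₁ ^ 2 + (-ε * s₁ / r) ^ 2 * s₂ ^ 2 +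
      2 * (s₂ / r) * (-ε * s₁ / r) * c) * r ^ 2 = 2 * s₁ * s₂ * (s₁ * s₂ - |c|) := by
    have hu : r⁻¹ ^ 2 * r ^ 2 = 1 := by rw [← mul_pow, inv_mul_cancel₀ hr.ne', one_pow]
    simp only [div_eq_mul_inv]
    linear_combination (s₁ ^ 2 * s₂ ^ 2 * (1 + ε ^ 2) - 2 * s₁ * s₂ * ε * c) * hu +
      s₁ ^ 2 * s₂ ^ 2 * hε - 2 * s₁ * s₂ * hεc
  refine ⟨s₂ / r, -ε * s₁ / r, ?_, ?_, ?_⟩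
  · field_simp
    linear_combination s₁ ^ 2 * hε - hr2
  all_goals
    refine lt_of_mul_lt_mul_right ?_ (sq_nonneg r)
    rw [hq, hr2]
    nlinarith [mul_pos hs₁ hs₂, pow_pos hs₁ 4, pow_pos hs₂ 4]

theorem stmt0_general {α : Type*} {n : ℕ} (D : Fin n → α) (F1 F2 : α → ℝ)
    (h1 : dstd (fun i => F1 (D i)) ≠ 0) (h2 : dstd (fun i => F2 (D i)) ≠ 0)
    (hρ : 1 / 2 ≤ |dcorr (fun i => F1 (D i)) (fun i => F2 (D i))|) :
    ∃ β1 β2 : ℝ, β1 ^ 2 + β2 ^ 2 = 1 ∧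
      dstd (fun i => β1 * F1 (D i) + β2 * F2 (D i)) < dstd (fun i => F1 (D i)) ∧
      dstd (fun i => β1 * F1 (D i) + β2 * F2 (D i)) < dstd (fun i => F2 (D i)) := by
  set x : Fin n → ℝ := fun i => F1 (D i)
  set y : Fin n → ℝ := fun i => F2 (D i)
  have hs₁ : 0 < dstd x := (Real.sqrt_nonneg _).lt_of_ne' h1
  have hs₂ : 0 < dstd y := (Real.sqrt_nonneg _).lt_of_ne' h2
  have hcov : dstd x * dstd y ≤ 2 * |dcov x y| := by
    rw [dcov_eq_dcorr_mul h1 h2, abs_mul, abs_of_pos (mul_pos hs₁ hs₂)]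
    nlinarith [mul_pos hs₁ hs₂]
  obtain ⟨β₁, β₂, hβ, hlt₁, hlt₂⟩ := exists_unit_quadratic_lt hs₁ hs₂ hcov
  have hvar : dvar (fun i => β₁ * x i + β₂ * y i) =
      β₁ ^ 2 * dstd x ^ 2 + β₂ ^ 2 * dstd y ^ 2 + 2 * β₁ * β₂ * dcov x y := by
    rw [dvar_linear_comb, dstd_sq, dstd_sq]
  refine ⟨β₁, β₂, hβ, ?_, ?_⟩
  · rw [dstd, Real.sqrt_lt' hs₁, hvar]; exact hlt₁
  · rw [dstd, Real.sqrt_lt' hs₂, hvar]; exact hlt₂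

theorem stmt0 {α : Type*} {n : ℕ} (hn : 0 < n) (D : Fin n → α) (F1 F2 : α → ℝ)
    (h1 : dstd (fun i => F1 (D i)) ≠ 0) (h2 : dstd (fun i => F2 (D i)) ≠ 0)
    (hρ : 1 / 2 ≤ |dcorr (fun i => F1 (D i)) (fun i => F2 (D i))|) :
    ∃ β1 β2 : ℝ, β1 ^ 2 + β2 ^ 2 = 1 ∧
      dstd (fun i => β1 * F1 (D i) + β2 * F2 (D i)) < dstd (fun i => F1 (D i)) ∧
      dstd (fun i => β1 * F1 (D i) + β2 * F2 (D i)) < dstd (fun i => F2 (D i)) :=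
  stmt0_general D F1 F2 h1 h2 hρ
end

section
/- Let [D;Y] be an annotated dataset, C a class of functions Dom^m → coDom, and F: Dom^m → ℝ a projection such that: (A1) F(t') = 0 for all t' ∈ D; (A2) for every f ∈ C and every constant tuple t^c, the function t ↦ f(ite(F(t), t^c, t)) belongs to C, where ite(r, a, b) equals a if r ≠ 0 and equals b if r = 0; (A3) there exist t_1, t_2 ∈ D with Y(t_1) ≠ Y(t_2); and (A4) there exists f ∈ C with f(D) = Y. Then for any tuple t ∈ Dom^m, if F(t) ≠ 0, then t is unsafe with respect to C and [D;Y]. -/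
theorem stmt13 {Dom coDom : Type*} (C : Set (Dom → coDom)) (D : Finset Dom)
    (Y : Dom → coDom) (F : Dom → ℝ)
    (hA1 : ∀ t' ∈ D, F t' = 0)
    (hA2 : ∀ f ∈ C, ∀ tc : Dom,
      (fun t => f (if F t = 0 then t else tc)) ∈ C)
    (hA3 : ∃ t1 ∈ D, ∃ t2 ∈ D, Y t1 ≠ Y t2)
    (hA4 : ∃ f ∈ C, ∀ t' ∈ D, f t' = Y t') :
    ∀ t : Dom, F t ≠ 0 →
      ∃ f ∈ C, ∃ g ∈ C,
        (∀ t' ∈ D, f t' = Y t') ∧ (∀ t' ∈ D, g t' = Y t') ∧ f t ≠ g t := by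
  obtain ⟨f, hfC, hfD⟩ := hA4
  obtain ⟨t1, ht1, t2, ht2, hY⟩ := hA3
  intro t ht
  refine ⟨fun s => f (if F s = 0 then s else t1), hA2 f hfC t1,
    fun s => f (if F s = 0 then s else t2), hA2 f hfC t2, ?_, ?_, ?_⟩
  · intro t' ht'; simp [hA1 t' ht', hfD t' ht']
  · intro t' ht'; simp [hA1 t' ht', hfD t' ht']
  · simp only [if_neg ht, hfD t1 ht1, hfD t2 ht2]; exact hY
end
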